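/- arXiv:1407.1401 — 5 statements merged into one kernel-verified Lean document; each statement's English description precedes it below -/
import Mathlib

section
/- Each component R_i = Σⱼ pⱼ(qⱼpᵢ − qᵢpⱼ) + (qᵢ/|q|)(ηH + k) of the deformed Runge–Lenz vector Poisson-commutes with the Hamiltonian H = |q|·p²/(2(η+|q|)) − k/(η+|q|): {H, R_i} = 0 on ℝᴺ∖{0} × ℝᴺ. -/
open Filter

/-- Euclidean norm of a point of ℝᴺ. -/
noncomputable def nrm {N : ℕ} (q : Fin N → ℝ) : ℝ := Real.sqrt (∑ i, q i ^ 2)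

/-- The canonical Poisson bracket {F,G} = Σᵢ (∂F/∂qᵢ ∂G/∂pᵢ − ∂F/∂pᵢ ∂G/∂qᵢ)
on phase space ℝᴺ × ℝᴺ, evaluated at a point `x = (q,p)`. -/
noncomputable def pbracket {N : ℕ}
    (F G : (Fin N → ℝ) × (Fin N → ℝ) → ℝ)
    (x : (Fin N → ℝ) × (Fin N → ℝ)) : ℝ :=
  ∑ i : Fin N,
    (deriv (fun t => F (Function.update x.1 i t, x.2)) (x.1 i) *
       deriv (fun t => G (x.1, Function.update x.2 i t)) (x.2 i) -
     deriv (fun t => F (x.1, Function.update x.2 i t)) (x.2 i) *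
       deriv (fun t => G (Function.update x.1 i t, x.2)) (x.1 i))

/-- Angular momentum component J_{ij} = qᵢ pⱼ − qⱼ pᵢ. -/
def J {N : ℕ} (i j : Fin N) (x : (Fin N → ℝ) × (Fin N → ℝ)) : ℝ :=
  x.1 i * x.2 j - x.1 j * x.2 i

/-- The deformed Coulomb Hamiltonian H = |q| p² / (2(η+|q|)) − k/(η+|q|). -/
noncomputable def Ham {N : ℕ} (η k : ℝ)
    (x : (Fin N → ℝ) × (Fin N → ℝ)) : ℝ :=
  nrm x.1 * (∑ i, x.2 i ^ 2) / (2 * (η + nrm x.1)) - k / (η + nrm x.1)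

/-- The i-th component of the deformed Runge–Lenz vector. -/
noncomputable def RL {N : ℕ} (η k : ℝ) (i : Fin N)
    (x : (Fin N → ℝ) × (Fin N → ℝ)) : ℝ :=
  (∑ j, x.2 j * (x.1 j * x.2 i - x.1 i * x.2 j)) +
    x.1 i / nrm x.1 * (η * Ham η k x + k)

/-!
Off the singular set `η + |q| = 0`, write `κ = η p² + 2k`. Then `ηH + k = κ|q| / (2(η + |q|))`, so
`H = p²/2 − κ/(2(η + |q|))` and `∇_q H = κ q / (2|q|(η + |q|)²)`, `∇_p H = |q| p / (η + |q|)`.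
Hence `{H, R_i}` is a combination of the two Euler-type derivatives `q · ∇_p R_i` and
`p · ∇_q R_i`, which are computed in closed form and cancel.

On the singular set every term of the bracket vanishes: `H(q, ·) ≡ 0` there because `x / 0 = 0`,
and along a `q`-coordinate line `H = p²/2 − κ/(2(η + |q|))` away from `q`, which is continuous at
`q` only if `κ = p² = 0`; so `H` is either not differentiable at `q` (junk derivative `0`) or
vanishes near `q`.
-/

open Function Topology

theorem HasDerivAt.dotProduct {N : ℕ} {f g : ℝ → Fin N → ℝ} {f' g' : Fin N → ℝ} {t : ℝ}
    (hf : HasDerivAt f f' t) (hg : HasDerivAt g g' t) :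
    HasDerivAt (fun τ => f τ ⬝ᵥ g τ) (f' ⬝ᵥ g t + f t ⬝ᵥ g') t := by
  have h := HasDerivAt.fun_sum (u := Finset.univ) fun m _ =>
    (hasDerivAt_pi.1 hf m).mul (hasDerivAt_pi.1 hg m)
  rwa [Finset.sum_add_distrib] at h

theorem sq_nrm {N : ℕ} (q : Fin N → ℝ) : nrm q ^ 2 = q ⬝ᵥ q := by
  rw [nrm, Real.sq_sqrt (by positivity)]; simp [dotProduct, sq]

theorem nrm_pos {N : ℕ} {q : Fin N → ℝ} (hq : q ≠ 0) : 0 < nrm q := by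
  refine Real.sqrt_pos.2 (Finset.sum_pos' (fun _ _ => sq_nonneg _) ?_)
  obtain ⟨j, hj⟩ := ne_iff.1 hq
  have hj : q j ≠ 0 := by simpa using hj
  exact ⟨j, Finset.mem_univ j, by positivity⟩

@[fun_prop]
theorem continuous_nrm {N : ℕ} : Continuous (nrm (N := N)) := by
  unfold nrm; fun_prop

theorem hasDerivAt_nrm_comp {N : ℕ} {f : ℝ → Fin N → ℝ} {f' : Fin N → ℝ} {t : ℝ}
    (hf : HasDerivAt f f' t) (ht : f t ≠ 0) :
    HasDerivAt (fun τ => nrm (f τ)) (f t ⬝ᵥ f' / nrm (f t)) t := by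
  have hsq : ∀ v : Fin N → ℝ, nrm v = Real.sqrt (v ⬝ᵥ v) := fun v => by
    rw [← sq_nrm]; exact (Real.sqrt_sq (Real.sqrt_nonneg _)).symm
  have hpos : f t ⬝ᵥ f t ≠ 0 := by rw [← sq_nrm]; exact (pow_pos (nrm_pos ht) 2).ne'
  simp only [hsq]
  convert (hf.dotProduct hf).sqrt hpos using 1
  rw [dotProduct_comm f']; ring

theorem sq_nrm_update {N : ℕ} (q : Fin N → ℝ) (j : Fin N) (t : ℝ) :
    nrm (update q j t) ^ 2 = nrm q ^ 2 - q j ^ 2 + t ^ 2 := by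
  simp only [sq_nrm, dotProduct]
  rw [← Finset.add_sum_erase _ _ (Finset.mem_univ j),
    ← Finset.add_sum_erase _ _ (Finset.mem_univ j)]
  rw [Finset.sum_congr rfl fun m hm => by rw [update_of_ne (Finset.ne_of_mem_erase hm)]]
  simp; ring

theorem eventually_sq_ne_sq (t₀ : ℝ) : ∀ᶠ t in 𝓝[≠] t₀, t ^ 2 ≠ t₀ ^ 2 := by
  have hneg : ∀ᶠ t in 𝓝[≠] t₀, t ≠ -t₀ := by
    rcases eq_or_ne t₀ 0 with h | h
    · rw [h, neg_zero]; exact eventually_mem_nhdsWithin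
    · exact (eventually_ne_nhds (by contrapose! h; linarith)).filter_mono nhdsWithin_le_nhds
  filter_upwards [hneg, eventually_mem_nhdsWithin] with t h₁ h₂
  rw [Ne, sq_eq_sq_iff_eq_or_eq_neg]; tauto

theorem sum_sq_eq_dotProduct {N : ℕ} (v : Fin N → ℝ) : ∑ m, v m ^ 2 = v ⬝ᵥ v := by
  simp [dotProduct, sq]

theorem Ham_of_eq_zero {N : ℕ} {η k : ℝ} {x : (Fin N → ℝ) × (Fin N → ℝ)}
    (hs : η + nrm x.1 = 0) : Ham η k x = 0 := by
  simp [Ham, hs]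

theorem Ham_eq_sub_div {N : ℕ} {η k : ℝ} {x : (Fin N → ℝ) × (Fin N → ℝ)} (hs : η + nrm x.1 ≠ 0) :
    Ham η k x = x.2 ⬝ᵥ x.2 / 2 - (η * (x.2 ⬝ᵥ x.2) + 2 * k) / (2 * (η + nrm x.1)) := by
  rw [Ham, sum_sq_eq_dotProduct]
  field_simp
  ring

theorem RL_eq_dotProduct {N : ℕ} (η k : ℝ) (i : Fin N) (x : (Fin N → ℝ) × (Fin N → ℝ)) :
    RL η k i x = (x.1 ⬝ᵥ x.2) * x.2 i - x.1 i * (x.2 ⬝ᵥ x.2) +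
      x.1 i / nrm x.1 * (η * Ham η k x + k) := by
  simp only [RL, dotProduct, mul_sub, Finset.sum_sub_distrib, Finset.sum_mul, Finset.mul_sum]
  congr 2 <;> refine Finset.sum_congr rfl fun j _ => by ring

section Curve

variable {N : ℕ} {η k : ℝ} {Q P : ℝ → Fin N → ℝ} {Q' P' : Fin N → ℝ} {t : ℝ}

theorem hasDerivAt_Ham_comp (hQ : HasDerivAt Q Q' t) (hP : HasDerivAt P P' t) (hQt : Q t ≠ 0)
    (hs : η + nrm (Q t) ≠ 0) :
    HasDerivAt (fun τ => Ham η k (Q τ, P τ))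
      (nrm (Q t) / (η + nrm (Q t)) * (P t ⬝ᵥ P') +
        (η * (P t ⬝ᵥ P t) + 2 * k) / (2 * nrm (Q t) * (η + nrm (Q t)) ^ 2) * (Q t ⬝ᵥ Q')) t := by
  have hr := (nrm_pos hQt).ne'
  have hN := hasDerivAt_nrm_comp hQ hQt
  simp only [Ham, sum_sq_eq_dotProduct]
  refine ((hN.mul (hP.dotProduct hP)).div ((hN.const_add η).const_mul 2) (by simpa using hs)).sub
    ((hasDerivAt_const t k).div (hN.const_add η) hs) |>.congr_deriv ?_
  rw [Pi.mul_apply, dotProduct_comm P' (P t)]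
  field_simp
  ring

theorem hasDerivAt_RL_comp (i : Fin N) (hQ : HasDerivAt Q Q' t) (hP : HasDerivAt P P' t)
    (hQt : Q t ≠ 0) (hs : η + nrm (Q t) ≠ 0) :
    HasDerivAt (fun τ => RL η k i (Q τ, P τ))
      ((Q' ⬝ᵥ P t + Q t ⬝ᵥ P') * P t i + (Q t ⬝ᵥ P t) * P' i - (P t ⬝ᵥ P t) * Q' i
        - 2 * Q t i * (P t ⬝ᵥ P') + (η * (P t ⬝ᵥ P t) + 2 * k) / (2 * (η + nrm (Q t))) * Q' i
        + η * Q t i * (P t ⬝ᵥ P') / (η + nrm (Q t))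
        - Q t i * (η * (P t ⬝ᵥ P t) + 2 * k) * (Q t ⬝ᵥ Q') /
            (2 * nrm (Q t) * (η + nrm (Q t)) ^ 2)) t := by
  have hr := (nrm_pos hQt).ne'
  simp only [RL_eq_dotProduct]
  refine (((hQ.dotProduct hP).mul (hasDerivAt_pi.1 hP i)).sub
    ((hasDerivAt_pi.1 hQ i).mul (hP.dotProduct hP))).add
    (((hasDerivAt_pi.1 hQ i).div (hasDerivAt_nrm_comp hQ hQt) hr).mul
      (((hasDerivAt_Ham_comp (k := k) hQ hP hQt hs).const_mul η).add_const k)) |>.congr_deriv ?_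
  rw [Pi.div_apply, Ham_eq_sub_div hs, dotProduct_comm P' (P t)]
  field_simp
  ring

end Curve

section PartialDerivatives

variable {N : ℕ} {η k : ℝ} {q : Fin N → ℝ} (p : Fin N → ℝ) (j : Fin N)

theorem deriv_Ham_update_fst (hq : q ≠ 0) (hs : η + nrm q ≠ 0) :
    deriv (fun t => Ham η k (update q j t, p)) (q j) =
      (η * (p ⬝ᵥ p) + 2 * k) / (2 * nrm q * (η + nrm q) ^ 2) * q j := by
  have h := hasDerivAt_Ham_comp (k := k) (hasDerivAt_update q j (q j)) (hasDerivAt_const _ p)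
    (by simpa using hq) (by simpa using hs)
  simpa using h.deriv

theorem deriv_Ham_update_snd (hq : q ≠ 0) (hs : η + nrm q ≠ 0) :
    deriv (fun t => Ham η k (q, update p j t)) (p j) = nrm q / (η + nrm q) * p j := by
  have h := hasDerivAt_Ham_comp (k := k) (hasDerivAt_const _ q) (hasDerivAt_update p j (p j))
    hq hs
  simpa using h.deriv

theorem deriv_RL_update_fst (i : Fin N) (hq : q ≠ 0) (hs : η + nrm q ≠ 0) :
    deriv (fun t => RL η k i (update q j t, p)) (q j) =
      p j * p i - (p ⬝ᵥ p) * (Pi.single j 1 : Fin N → ℝ) i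
        + (η * (p ⬝ᵥ p) + 2 * k) / (2 * (η + nrm q)) * (Pi.single j 1 : Fin N → ℝ) i
        - q i * (η * (p ⬝ᵥ p) + 2 * k) * q j / (2 * nrm q * (η + nrm q) ^ 2) := by
  have h := hasDerivAt_RL_comp (k := k) i (hasDerivAt_update q j (q j)) (hasDerivAt_const _ p)
    (by simpa using hq) (by simpa using hs)
  simpa using h.deriv

theorem deriv_RL_update_snd (i : Fin N) (hq : q ≠ 0) (hs : η + nrm q ≠ 0) :
    deriv (fun t => RL η k i (q, update p j t)) (p j) =
      q j * p i + (q ⬝ᵥ p) * (Pi.single j 1 : Fin N → ℝ) i - 2 * q i * p j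
        + η * q i * p j / (η + nrm q) := by
  have h := hasDerivAt_RL_comp (k := k) i (hasDerivAt_const _ q) (hasDerivAt_update p j (p j))
    hq hs
  simpa using h.deriv

end PartialDerivatives

section Sums

variable {N : ℕ} {η k : ℝ} {q : Fin N → ℝ} (p : Fin N → ℝ) (i : Fin N)

theorem sum_mul_deriv_RL_update_snd (hq : q ≠ 0) (hs : η + nrm q ≠ 0) :
    ∑ j, q j * deriv (fun t => RL η k i (q, update p j t)) (p j) =
      nrm q ^ 2 * p i - q i * (q ⬝ᵥ p) + η * q i * (q ⬝ᵥ p) / (η + nrm q) := by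
  have h : ∀ j, q j * deriv (fun t => RL η k i (q, update p j t)) (p j) =
      p i * (q j * q j) + (q ⬝ᵥ p) * ((Pi.single j 1 : Fin N → ℝ) i * q j) +
        (η * q i / (η + nrm q) - 2 * q i) * (q j * p j) := fun j => by
    rw [deriv_RL_update_snd p j i hq hs]; ring
  simp only [h, Finset.sum_add_distrib, ← Finset.mul_sum, sq_nrm, Pi.single_apply, ite_mul,
    one_mul, zero_mul, Finset.sum_ite_eq, Finset.mem_univ, if_true]
  simp only [dotProduct]
  ring

theorem sum_mul_deriv_RL_update_fst (hq : q ≠ 0) (hs : η + nrm q ≠ 0) :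
    ∑ j, p j * deriv (fun t => RL η k i (update q j t, p)) (q j) =
      (η * (p ⬝ᵥ p) + 2 * k) / (2 * (η + nrm q)) * p i
        - q i * (η * (p ⬝ᵥ p) + 2 * k) * (q ⬝ᵥ p) / (2 * nrm q * (η + nrm q) ^ 2) := by
  have h : ∀ j, p j * deriv (fun t => RL η k i (update q j t, p)) (q j) =
      p i * (p j * p j) + ((η * (p ⬝ᵥ p) + 2 * k) / (2 * (η + nrm q)) - p ⬝ᵥ p) *
        ((Pi.single j 1 : Fin N → ℝ) i * p j) -
        q i * (η * (p ⬝ᵥ p) + 2 * k) / (2 * nrm q * (η + nrm q) ^ 2) * (q j * p j) := fun j => by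
    rw [deriv_RL_update_fst p j i hq hs]; ring
  simp only [h, Finset.sum_add_distrib, Finset.sum_sub_distrib, ← Finset.mul_sum, Pi.single_apply,
    ite_mul, one_mul, zero_mul, Finset.sum_ite_eq, Finset.mem_univ, if_true]
  simp only [dotProduct]
  ring

end Sums

theorem deriv_eq_zero_of_eventually_eq_sub_div {f g : ℝ → ℝ} {t₀ a c : ℝ}
    (hg : ContinuousAt g t₀) (hg₀ : g t₀ = 0) (hf₀ : f t₀ = 0)
    (hfg : ∀ᶠ t in 𝓝[≠] t₀, g t ≠ 0 ∧ f t = a - c / g t) : deriv f t₀ = 0 := by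
  by_cases hd : DifferentiableAt ℝ f t₀
  swap
  · exact deriv_zero_of_not_differentiableAt hd
  have hf : Tendsto f (𝓝[≠] t₀) (𝓝 0) :=
    hf₀ ▸ hd.continuousAt.tendsto.mono_left nhdsWithin_le_nhds
  have hc : c = 0 := by
    have hlim : Tendsto (fun t => (a - f t) * g t) (𝓝[≠] t₀) (𝓝 ((a - 0) * 0)) :=
      (tendsto_const_nhds.sub hf).mul (hg₀ ▸ hg.tendsto.mono_left nhdsWithin_le_nhds)
    have heq : (fun t => (a - f t) * g t) =ᶠ[𝓝[≠] t₀] fun _ => c :=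
      hfg.mono fun t ⟨hgt, hft⟩ => by simp only [hft]; field_simp; ring
    simpa using (tendsto_nhds_unique (hlim.congr' heq) tendsto_const_nhds).symm
  have ha : a = 0 := by
    have heq : f =ᶠ[𝓝[≠] t₀] fun _ => a := hfg.mono fun t ⟨_, hft⟩ => by simp [hft, hc]
    exact tendsto_nhds_unique (tendsto_const_nhds.congr' heq.symm) hf
  have hzero : f =ᶠ[𝓝 t₀] fun _ => 0 := by
    rw [← nhdsNE_sup_pure, EventuallyEq, eventually_sup]
    exact ⟨hfg.mono fun t ⟨_, hft⟩ => by simp [hft, hc, ha], hf₀⟩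
  rw [hzero.deriv_eq, deriv_const]

section Degenerate

variable {N : ℕ} {η k : ℝ} {q : Fin N → ℝ} (p : Fin N → ℝ) (j : Fin N)

theorem deriv_Ham_update_fst_of_eq_zero (hs : η + nrm q = 0) :
    deriv (fun t => Ham η k (update q j t, p)) (q j) = 0 := by
  refine deriv_eq_zero_of_eventually_eq_sub_div (g := fun t => η + nrm (update q j t))
    (a := p ⬝ᵥ p / 2) (c := (η * (p ⬝ᵥ p) + 2 * k) / 2)
    (by fun_prop) (by simpa using hs) (Ham_of_eq_zero (by simpa using hs)) ?_
  filter_upwards [eventually_sq_ne_sq (q j)] with t ht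
  have hst : η + nrm (update q j t) ≠ 0 := by
    intro h
    have := sq_nrm_update q j t
    rw [show nrm (update q j t) = nrm q by linarith] at this
    exact ht (by linarith)
  exact ⟨hst, by rw [Ham_eq_sub_div hst]; field_simp⟩

theorem deriv_Ham_update_snd_of_eq_zero (hs : η + nrm q = 0) :
    deriv (fun t => Ham η k (q, update p j t)) (p j) = 0 := by
  simp [Ham_of_eq_zero (k := k) (x := (q, _)) hs]

end Degenerate

/-- Each component of the deformed Runge–Lenz vector Poisson-commutes with
the deformed Coulomb Hamiltonian on (ℝᴺ∖{0}) × ℝᴺ. -/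
theorem runge_lenz_commutes {N : ℕ} (η k : ℝ) (i : Fin N)
    (x : (Fin N → ℝ) × (Fin N → ℝ)) (hx : x.1 ≠ 0) :
    pbracket (Ham η k) (RL η k i) x = 0 := by
  obtain ⟨q, p⟩ := x
  by_cases hs : η + nrm q = 0
  · refine Finset.sum_eq_zero fun j _ => ?_
    simp only [deriv_Ham_update_fst_of_eq_zero p j hs, deriv_Ham_update_snd_of_eq_zero p j hs,
      zero_mul, sub_zero]
  have hq : q ≠ 0 := hx
  calc pbracket (Ham η k) (RL η k i) (q, p)
      = (η * (p ⬝ᵥ p) + 2 * k) / (2 * nrm q * (η + nrm q) ^ 2) *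
            ∑ j, q j * deriv (fun t => RL η k i (q, update p j t)) (p j) -
          nrm q / (η + nrm q) * ∑ j, p j * deriv (fun t => RL η k i (update q j t, p)) (q j) := by
        simp only [pbracket, deriv_Ham_update_fst p _ hq hs, deriv_Ham_update_snd p _ hq hs,
          Finset.mul_sum, ← Finset.sum_sub_distrib, mul_assoc]
    _ = 0 := by
        rw [sum_mul_deriv_RL_update_snd p i hq hs, sum_mul_deriv_RL_update_fst p i hq hs]
        have hr := (nrm_pos hq).ne'
        field_simp
        ring
end

section
/- The squared norm of the deformed Runge–Lenz vector satisfies the functional relation Σᵢ Rᵢ² = 2 L² H + (ηH + k)², where L² = Σ_{i<j}(qᵢpⱼ − qⱼpᵢ)² is the squared total angular momentum. -/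
open Filter

/-- Squared total angular momentum L² = Σ_{i<j} (qᵢpⱼ−qⱼpᵢ)². -/
def L2 {N : ℕ} (x : (Fin N → ℝ) × (Fin N → ℝ)) : ℝ :=
  ∑ i : Fin N, ∑ j : Fin N, if i < j then (J i j x) ^ 2 else 0

lemma expand_sum {N : ℕ} (A B C : ℝ) (f g h : Fin N → ℝ) :
    ∑ j, (A * f j + B * g j + C * h j) =
      A * ∑ j, f j + B * ∑ j, g j + C * ∑ j, h j := by
  simp [Finset.sum_add_distrib, Finset.mul_sum]

/-- The functional relation Σᵢ Rᵢ² = 2 L² H + (ηH + k)² for the deformed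
Runge–Lenz vector. -/
theorem runge_lenz_norm_sq {N : ℕ} (η k : ℝ)
    (x : (Fin N → ℝ) × (Fin N → ℝ)) (hx : x.1 ≠ 0)
    (hden : η + nrm x.1 ≠ 0) :
    ∑ i, (RL η k i x) ^ 2 =
      2 * L2 x * Ham η k x + (η * Ham η k x + k) ^ 2 := by
  obtain ⟨q, p⟩ := x
  have hx' : q ≠ 0 := hx
  have hden' : η + nrm q ≠ 0 := hden
  obtain ⟨i0, hi0⟩ := Function.ne_iff.mp hx'
  have hSpos : 0 < ∑ i, q i ^ 2 :=
    Finset.sum_pos' (fun i _ => sq_nonneg _) ⟨i0, Finset.mem_univ i0, (sq_nonneg _).lt_of_ne' (pow_ne_zero 2 hi0)⟩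
  have hrpos : 0 < nrm q := Real.sqrt_pos.mpr hSpos
  have hr : nrm q ≠ 0 := ne_of_gt hrpos
  have hS : ∑ i, q i ^ 2 = nrm q ^ 2 := (Real.sq_sqrt hSpos.le).symm
  -- the key identity for the Hamiltonian
  have hc : η * Ham η k (q, p) + k =
      nrm q * (∑ i, p i ^ 2) / 2 - nrm q * Ham η k (q, p) := by
    simp only [Ham]
    field_simp
    ring
  -- rewrite each RL component without divisions
  have hRL : ∀ i, RL η k i (q, p) =
      (∑ j, q j * p j) * p i - ((∑ j, p j ^ 2) / 2 + Ham η k (q, p)) * q i := by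
    intro i
    have hsum : ∑ j, p j * (q j * p i - q i * p j)
        = p i * (∑ j, q j * p j) + (-(q i)) * (∑ j, p j ^ 2) + 0 * (∑ _j : Fin N, (0:ℝ)) := by
      rw [← expand_sum (p i) (-(q i)) 0 (fun j => q j * p j) (fun j => p j ^ 2) (fun _ => (0:ℝ))]
      exact Finset.sum_congr rfl fun j _ => by ring
    show (∑ j, p j * (q j * p i - q i * p j)) + q i / nrm q * (η * Ham η k (q, p) + k) = _
    rw [hsum, hc]
    field_simp
    ring
  -- L2 equals S*P - D^2
  have hJsq : ∀ i j : Fin N, (J i j (q, p)) ^ 2 =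
      (if i < j then (J i j (q, p)) ^ 2 else 0) +
      (if j < i then (J i j (q, p)) ^ 2 else 0) := by
    intro i j
    rcases lt_trichotomy i j with h | h | h
    · rw [if_pos h, if_neg (asymm h)]; ring
    · subst h; simp [J]
    · rw [if_neg (asymm h), if_pos h]; ring
  have hdouble : ∑ i, ∑ j, (J i j (q, p)) ^ 2 = 2 * L2 (q, p) := by
    have hswap : ∑ i : Fin N, ∑ j, (if j < i then (J i j (q, p)) ^ 2 else 0) = L2 (q, p) := by
      rw [Finset.sum_comm]
      refine Finset.sum_congr rfl fun i _ => Finset.sum_congr rfl fun j _ => ?_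
      have hsym : (J j i (q, p)) ^ 2 = (J i j (q, p)) ^ 2 := by simp only [J]; ring
      rw [hsym]
    calc ∑ i, ∑ j, (J i j (q, p)) ^ 2
        = ∑ i, ∑ j, ((if i < j then (J i j (q, p)) ^ 2 else 0) +
            (if j < i then (J i j (q, p)) ^ 2 else 0)) :=
          Finset.sum_congr rfl fun i _ => Finset.sum_congr rfl fun j _ => hJsq i j
      _ = (∑ i, ∑ j, (if i < j then (J i j (q, p)) ^ 2 else 0)) +
            ∑ i, ∑ j, (if j < i then (J i j (q, p)) ^ 2 else 0) := by
          simp [Finset.sum_add_distrib]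
      _ = L2 (q, p) + L2 (q, p) := by rw [hswap]; rfl
      _ = 2 * L2 (q, p) := by ring
  have hdouble2 : ∑ i, ∑ j, (J i j (q, p)) ^ 2 =
      2 * ((∑ i, q i ^ 2) * (∑ i, p i ^ 2) - (∑ i, q i * p i) ^ 2) := by
    calc ∑ i, ∑ j, (J i j (q, p)) ^ 2
        = ∑ i, (q i ^ 2 * (∑ j, p j ^ 2) + p i ^ 2 * (∑ j, q j ^ 2) +
            (-(2 * (q i * p i))) * (∑ j, q j * p j)) := by
          refine Finset.sum_congr rfl fun i _ => ?_
          rw [← expand_sum (q i ^ 2) (p i ^ 2) (-(2 * (q i * p i)))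
            (fun j => p j ^ 2) (fun j => q j ^ 2) (fun j => q j * p j)]
          refine Finset.sum_congr rfl fun j _ => ?_
          simp only [J]; ring
      _ = ∑ i, ((∑ j, p j ^ 2) * q i ^ 2 + (∑ j, q j ^ 2) * p i ^ 2 +
            (-(2 * (∑ j, q j * p j))) * (q i * p i)) :=
          Finset.sum_congr rfl fun i _ => by ring
      _ = (∑ j, p j ^ 2) * (∑ i, q i ^ 2) + (∑ j, q j ^ 2) * (∑ i, p i ^ 2) +
            (-(2 * (∑ j, q j * p j))) * (∑ i, q i * p i) := expand_sum _ _ _ _ _ _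
      _ = 2 * ((∑ i, q i ^ 2) * (∑ i, p i ^ 2) - (∑ i, q i * p i) ^ 2) := by ring
  have hL2 : L2 (q, p) = (∑ i, q i ^ 2) * (∑ i, p i ^ 2) - (∑ i, q i * p i) ^ 2 := by
    have := hdouble.symm.trans hdouble2
    linarith
  -- expand the left-hand side
  have hLHS : ∑ i, (RL η k i (q, p)) ^ 2 =
      ((∑ j, q j * p j)) ^ 2 * (∑ i, p i ^ 2) +
        ((∑ j, p j ^ 2) / 2 + Ham η k (q, p)) ^ 2 * (∑ i, q i ^ 2) +
        (-(2 * (∑ j, q j * p j) * ((∑ j, p j ^ 2) / 2 + Ham η k (q, p)))) *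
          (∑ i, q i * p i) := by
    calc ∑ i, (RL η k i (q, p)) ^ 2
        = ∑ i, (((∑ j, q j * p j)) ^ 2 * p i ^ 2 +
            ((∑ j, p j ^ 2) / 2 + Ham η k (q, p)) ^ 2 * q i ^ 2 +
            (-(2 * (∑ j, q j * p j) * ((∑ j, p j ^ 2) / 2 + Ham η k (q, p)))) *
              (q i * p i)) := by
          refine Finset.sum_congr rfl fun i _ => ?_
          rw [hRL i]; ring
      _ = _ := expand_sum _ _ _ _ _ _
  rw [hLHS, hL2, hc, hS]
  ring
end

section
/- The Hamiltonian H = |q|p²/(2(η+|q|)) − k/(η+|q|) Poisson-commutes with each of the 2N−3 angular observables C^{(m)} = Σ_{1≤i<j≤m}(qᵢpⱼ−qⱼpᵢ)² and C_{(m)} = Σ_{N−m<i<j≤N}(qᵢpⱼ−qⱼpᵢ)² for m = 2,…,N. -/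
open Filter

/-- C^{(m)} = Σ_{1≤i<j≤m} (qᵢpⱼ−qⱼpᵢ)² (indices 1,…,m in 1-based numbering,
i.e. `(j : ℕ) < m` in 0-based numbering). -/
def Cup {N : ℕ} (m : ℕ) (x : (Fin N → ℝ) × (Fin N → ℝ)) : ℝ :=
  ∑ i : Fin N, ∑ j : Fin N,
    if i < j ∧ (j : ℕ) < m then (J i j x) ^ 2 else 0

/-- C_{(m)} = Σ_{N−m<i<j≤N} (qᵢpⱼ−qⱼpᵢ)² (indices N−m+1,…,N in 1-based
numbering, i.e. `N − m ≤ (i : ℕ)` in 0-based numbering). -/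
def Cdown {N : ℕ} (m : ℕ) (x : (Fin N → ℝ) × (Fin N → ℝ)) : ℝ :=
  ∑ i : Fin N, ∑ j : Fin N,
    if i < j ∧ N - m ≤ (i : ℕ) then (J i j x) ^ 2 else 0

/-! The Hamiltonian depends on `q` only through `|q|` and on `p` only through `|p|²`, so
`∂H/∂qᵢ = A qᵢ` and `∂H/∂pᵢ = B pᵢ`, and `{H, G} = A (q · ∇_p G) - B (p · ∇_q G)`. Each `Jᵢⱼ`,
hence every sum of their squares, is invariant under the shears `p ↦ p + s q` and `q ↦ q + s p`,
so both directional derivatives vanish. -/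

open Function

section PartialDerivatives

variable {N : ℕ}

theorem sum_mul_deriv_update_eq_fderiv {f : (Fin N → ℝ) → ℝ} {y : Fin N → ℝ}
    (hf : DifferentiableAt ℝ f y) (v : Fin N → ℝ) :
    ∑ i, v i * deriv (fun t => f (update y i t)) (y i) = fderiv ℝ f y v := by
  have hpartial (i : Fin N) :
      deriv (fun t => f (update y i t)) (y i) = fderiv ℝ f y (Pi.single i 1) :=
    (hf.hasFDerivAt.comp_hasDerivAt_of_eq (y i) (hasDerivAt_update y i (y i))
      (update_eq_self i y).symm).deriv
  conv_rhs => rw [pi_eq_sum_univ' v]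
  simp [hpartial]

theorem fderiv_apply_eq_zero_of_forall_add_smul {f : (Fin N → ℝ) → ℝ} {y v : Fin N → ℝ}
    (hf : DifferentiableAt ℝ f y) (hinv : ∀ s : ℝ, f (y + s • v) = f y) :
    fderiv ℝ f y v = 0 := by
  have hconst : HasLineDerivAt ℝ f 0 y v := by
    simpa [HasLineDerivAt, hinv] using hasDerivAt_const (0 : ℝ) (f y)
  exact (hf.hasFDerivAt.hasLineDerivAt v).unique hconst

end PartialDerivatives

/- Holds for every `h`, so also where `H` is singular (`η + |q| = 0`): `u ↦ √(u ^ 2 - S)` is a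
differentiable local inverse of `s ↦ √(s ^ 2 + S)` near `t`, so where `h` is not differentiable
both sides are junk `0`. -/
theorem deriv_comp_sqrt_sq_add_of_pos (h : ℝ → ℝ) {S t : ℝ} (hS : 0 ≤ S) (ht : 0 < t) :
    deriv (fun s => h √(s ^ 2 + S)) t = deriv h √(t ^ 2 + S) * (t / √(t ^ 2 + S)) := by
  set r := √(t ^ 2 + S) with hr_def
  have hr : 0 < r := Real.sqrt_pos.2 (by positivity)
  by_cases hh : DifferentiableAt ℝ h r
  · have hφ : HasDerivAt (fun s => √(s ^ 2 + S)) (t / r) t := by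
      convert ((hasDerivAt_pow 2 t).add_const S).sqrt (by positivity) using 1
      rw [← hr_def]
      field_simp
      ring
    exact (hh.hasDerivAt.comp t hφ).deriv
  · have hψ : DifferentiableAt ℝ (fun u => √(u ^ 2 - S)) r := by
      have : r ^ 2 - S ≠ 0 := by
        rw [hr_def, Real.sq_sqrt (by positivity), add_sub_cancel_right]
        positivity
      fun_prop (disch := exact this)
    have hψr : √(r ^ 2 - S) = t := by
      rw [hr_def, Real.sq_sqrt (by positivity), add_sub_cancel_right, Real.sqrt_sq ht.le]
    have hleft_inv : (fun s => h √(s ^ 2 + S)) ∘ (fun u => √(u ^ 2 - S)) =ᶠ[nhds r] h := by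
      have hsq : ∀ᶠ u in nhds r, S < u ^ 2 := by
        have : S < r ^ 2 := by
          rw [hr_def, Real.sq_sqrt (by positivity)]
          linarith [sq_pos_of_pos ht]
        exact (continuous_pow 2).continuousAt.eventually (lt_mem_nhds this)
      filter_upwards [hsq, lt_mem_nhds hr] with u hu hu0
      rw [comp_apply, Real.sq_sqrt (by linarith), sub_add_cancel, Real.sqrt_sq hu0.le]
    have hnd : ¬ DifferentiableAt ℝ (fun s => h √(s ^ 2 + S)) t := fun hd =>
      hh (((hψr ▸ hd).comp r hψ).congr_of_eventuallyEq hleft_inv.symm)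
    rw [deriv_zero_of_not_differentiableAt hnd, deriv_zero_of_not_differentiableAt hh, zero_mul]

theorem deriv_comp_sqrt_sq_add (h : ℝ → ℝ) {S : ℝ} (hS : 0 ≤ S) (t : ℝ) :
    deriv (fun s => h √(s ^ 2 + S)) t = deriv h √(t ^ 2 + S) * (t / √(t ^ 2 + S)) := by
  have hreflect (t : ℝ) :
      deriv (fun s => h √(s ^ 2 + S)) t = -deriv (fun s => h √(s ^ 2 + S)) (-t) := by
    have := deriv_comp_neg (f := fun s => h √(s ^ 2 + S)) (x := t)
    simp only [neg_sq] at this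
    exact this
  rcases lt_trichotomy t 0 with ht | rfl | ht
  · rw [hreflect, deriv_comp_sqrt_sq_add_of_pos h hS (neg_pos.2 ht), neg_sq]
    ring
  · have := hreflect 0
    rw [neg_zero] at this
    simp only [zero_div, mul_zero]
    linarith
  · exact deriv_comp_sqrt_sq_add_of_pos h hS ht

theorem sum_sq_update {N : ℕ} (y : Fin N → ℝ) (i : Fin N) (t : ℝ) :
    ∑ j, update y i t j ^ 2 = t ^ 2 + ∑ j ∈ Finset.univ \ {i}, y j ^ 2 := by
  have hsq : (fun j => update y i t j ^ 2) = update (fun j => y j ^ 2) i (t ^ 2) :=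
    funext (apply_update (fun _ s => s ^ 2) y i t)
  rw [hsq]
  exact Finset.sum_update_of_mem (Finset.mem_univ i) _ _

theorem deriv_comp_nrm_update {N : ℕ} (h : ℝ → ℝ) (q : Fin N → ℝ) (i : Fin N) :
    deriv (fun t => h (nrm (update q i t))) (q i) = deriv h (nrm q) / nrm q * q i := by
  have hS : 0 ≤ ∑ j ∈ Finset.univ \ {i}, q j ^ 2 := Finset.sum_nonneg fun j _ => sq_nonneg _
  have hq : nrm q = √(q i ^ 2 + ∑ j ∈ Finset.univ \ {i}, q j ^ 2) := by
    rw [nrm, ← sum_sq_update, update_eq_self]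
  simp only [nrm, sum_sq_update] at hq ⊢
  rw [deriv_comp_sqrt_sq_add h hS, ← hq]
  ring

section PhaseSpace

variable {N : ℕ}

theorem Ham_deriv_update_fst_eq_mul (η k : ℝ) (x : (Fin N → ℝ) × (Fin N → ℝ)) :
    ∃ A : ℝ, ∀ i, deriv (fun t => Ham η k (update x.1 i t, x.2)) (x.1 i) = A * x.1 i :=
  ⟨_, deriv_comp_nrm_update (fun r => r * (∑ j, x.2 j ^ 2) / (2 * (η + r)) - k / (η + r)) x.1⟩

theorem Ham_deriv_update_snd (η k : ℝ) (x : (Fin N → ℝ) × (Fin N → ℝ)) (i : Fin N) :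
    deriv (fun t => Ham η k (x.1, update x.2 i t)) (x.2 i)
      = nrm x.1 / (η + nrm x.1) * x.2 i := by
  simp only [Ham, sum_sq_update]
  refine (((((hasDerivAt_pow 2 (x.2 i)).add_const _).const_mul (nrm x.1)).div_const _).sub_const
    _).deriv.trans ?_
  rw [mul_div_assoc, mul_comm (2 : ℝ) (η + _), ← div_div]
  push_cast
  ring

theorem J_add_smul_fst (a b : Fin N) (x : (Fin N → ℝ) × (Fin N → ℝ)) (s : ℝ) :
    J a b (x.1 + s • x.2, x.2) = J a b x := by
  simp only [J, Pi.add_apply, Pi.smul_apply, smul_eq_mul]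
  ring

theorem J_add_smul_snd (a b : Fin N) (x : (Fin N → ℝ) × (Fin N → ℝ)) (s : ℝ) :
    J a b (x.1, x.2 + s • x.1) = J a b x := by
  simp only [J, Pi.add_apply, Pi.smul_apply, smul_eq_mul]
  ring

theorem pbracket_eq_zero_of_invariant {F G : (Fin N → ℝ) × (Fin N → ℝ) → ℝ}
    {x : (Fin N → ℝ) × (Fin N → ℝ)} {A B : ℝ}
    (hFq : ∀ i, deriv (fun t => F (update x.1 i t, x.2)) (x.1 i) = A * x.1 i)
    (hFp : ∀ i, deriv (fun t => F (x.1, update x.2 i t)) (x.2 i) = B * x.2 i)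
    (hG : DifferentiableAt ℝ G x)
    (hGq : ∀ s : ℝ, G (x.1 + s • x.2, x.2) = G x)
    (hGp : ∀ s : ℝ, G (x.1, x.2 + s • x.1) = G x) :
    pbracket F G x = 0 := by
  have hq_dir : ∑ i, x.2 i * deriv (fun t => G (update x.1 i t, x.2)) (x.1 i) = 0 := by
    rw [sum_mul_deriv_update_eq_fderiv (f := fun q => G (q, x.2)) (by fun_prop)]
    exact fderiv_apply_eq_zero_of_forall_add_smul (by fun_prop) hGq
  have hp_dir : ∑ i, x.1 i * deriv (fun t => G (x.1, update x.2 i t)) (x.2 i) = 0 := by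
    rw [sum_mul_deriv_update_eq_fderiv (f := fun p => G (x.1, p)) (by fun_prop)]
    exact fderiv_apply_eq_zero_of_forall_add_smul (by fun_prop) hGp
  calc pbracket F G x
      = A * ∑ i, x.1 i * deriv (fun t => G (x.1, update x.2 i t)) (x.2 i)
        - B * ∑ i, x.2 i * deriv (fun t => G (update x.1 i t, x.2)) (x.1 i) := by
        simp only [pbracket, hFq, hFp, Finset.mul_sum, ← Finset.sum_sub_distrib, mul_assoc]
    _ = 0 := by rw [hq_dir, hp_dir, mul_zero, mul_zero, sub_zero]

theorem pbracket_Ham_sum_sq_J (η k : ℝ) (c : Fin N → Fin N → Prop) [DecidableRel c]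
    (x : (Fin N → ℝ) × (Fin N → ℝ)) :
    pbracket (Ham η k) (fun y => ∑ a, ∑ b, if c a b then J a b y ^ 2 else 0) x = 0 := by
  obtain ⟨A, hA⟩ := Ham_deriv_update_fst_eq_mul η k x
  refine pbracket_eq_zero_of_invariant hA (Ham_deriv_update_snd η k x) ?_ ?_ ?_
  · refine DifferentiableAt.fun_sum fun a _ => DifferentiableAt.fun_sum fun b _ => ?_
    split_ifs
    · unfold J; fun_prop
    · fun_prop
  · simp [J_add_smul_fst]
  · simp [J_add_smul_snd]

end PhaseSpace

theorem ham_commutes_angular_general {N : ℕ} (η k : ℝ) (m : ℕ)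
    (x : (Fin N → ℝ) × (Fin N → ℝ)) :
    pbracket (Ham η k) (Cup m) x = 0 ∧
    pbracket (Ham η k) (Cdown m) x = 0 :=
  ⟨pbracket_Ham_sum_sq_J η k _ x, pbracket_Ham_sum_sq_J η k _ x⟩

/-- The deformed Coulomb Hamiltonian Poisson-commutes with each of the
angular observables C^{(m)} and C_{(m)} for m = 2,…,N. -/
theorem ham_commutes_angular {N : ℕ} (η k : ℝ) (m : ℕ)
    (hm2 : 2 ≤ m) (hmN : m ≤ N)
    (x : (Fin N → ℝ) × (Fin N → ℝ)) (hx : x.1 ≠ 0) :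
    pbracket (Ham η k) (Cup m) x = 0 ∧
    pbracket (Ham η k) (Cdown m) x = 0 :=
  ham_commutes_angular_general η k m x
end

section
/- For k, η, ℏ > 0 and ν = n+l+(N−1)/2, the effective coupling K = k + ηE_{n,l} is strictly positive, where E_{n,l} = −k²/(ℏ²ν² + kη + √(ℏ⁴ν⁴ + 2ℏ²kην²)); moreover E_{n,l} = −K²/(2ℏ²ν²). -/
/-- For k, η, ℏ > 0, the effective coupling K = k + ηE is strictly positive,
and E = −K²/(2ℏ²ν²), where E is the deformed eigenvalue
E = −k²/(ℏ²ν² + kη + √(ℏ⁴ν⁴ + 2ℏ²kην²)). -/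
theorem effective_coupling_positive (ℏ k η ν : ℝ)
    (hℏ : 0 < ℏ) (hk : 0 < k) (hη : 0 < η) (hν : 0 < ν) :
    let E : ℝ := -k ^ 2 / (ℏ ^ 2 * ν ^ 2 + k * η +
      Real.sqrt (ℏ ^ 4 * ν ^ 4 + 2 * ℏ ^ 2 * k * η * ν ^ 2))
    let K : ℝ := k + η * E
    0 < K ∧ E = -K ^ 2 / (2 * ℏ ^ 2 * ν ^ 2) := by
  intro E K
  set s : ℝ := Real.sqrt (ℏ ^ 4 * ν ^ 4 + 2 * ℏ ^ 2 * k * η * ν ^ 2) with hs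
  have harg : (0:ℝ) ≤ ℏ ^ 4 * ν ^ 4 + 2 * ℏ ^ 2 * k * η * ν ^ 2 := by positivity
  have hs0 : 0 ≤ s := Real.sqrt_nonneg _
  have hs2 : s ^ 2 = ℏ ^ 4 * ν ^ 4 + 2 * ℏ ^ 2 * k * η * ν ^ 2 := Real.sq_sqrt harg
  set D : ℝ := ℏ ^ 2 * ν ^ 2 + k * η + s with hDdef
  have hD : 0 < D := by positivity
  have hE : E = -k ^ 2 / D := rfl
  have hK : K = k + η * E := rfl
  have hED : E * D = -k ^ 2 := by
    rw [hE]; field_simp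
  have hKD : K * D = k * (ℏ ^ 2 * ν ^ 2 + s) := by
    rw [hK, hE, hDdef]; field_simp; ring
  have key : (ℏ ^ 2 * ν ^ 2 + s) ^ 2 = 2 * ℏ ^ 2 * ν ^ 2 * D := by
    rw [hDdef]; nlinarith [hs2]
  have hKpos : 0 < K := by
    nlinarith [mul_pos hk (show (0:ℝ) < ℏ ^ 2 * ν ^ 2 + s by positivity), hKD, hD]
  refine ⟨hKpos, ?_⟩
  have hν2 : (0:ℝ) < 2 * ℏ ^ 2 * ν ^ 2 := by positivity
  have h1 : (K * D) ^ 2 = (k * (ℏ ^ 2 * ν ^ 2 + s)) ^ 2 := by rw [hKD]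
  have h2 : K ^ 2 * D = k ^ 2 * (2 * ℏ ^ 2 * ν ^ 2) := by
    have := mul_right_cancel₀ (ne_of_gt hD)
      (show (K ^ 2 * D) * D = (k ^ 2 * (2 * ℏ ^ 2 * ν ^ 2)) * D by
        linear_combination h1 + k ^ 2 * key)
    exact this
  rw [eq_div_iff (ne_of_gt hν2)]
  exact mul_right_cancel₀ (ne_of_gt hD)
    (by linear_combination (2 * ℏ ^ 2 * ν ^ 2) * hED + h2)
end

section
/- The eigenvalues E_𝔫 = −k²/(ℏ²μ² + kη + √(ℏ⁴μ⁴ + 2ℏ²kημ²)) with μ = 𝔫 + (N−1)/2 are strictly increasing in 𝔫, accumulate at 0 (lim_{𝔫→∞} E_𝔫 = 0), and consecutive gaps tend to zero: lim_{𝔫→∞}(E_{𝔫+1} − E_𝔫) = 0. -/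
open Filter Set

/-!
With `t = ℏ²μ²` and `c = kη`, the denominator of `E_𝔫` is `D = t + c + √(t² + 2ct)`, which
is strictly increasing in `t ≥ 0` and tends to `∞`. Since `μ(𝔫) ≥ 0` grows without bound,
`E_𝔫 = -k²/D` increases strictly to `0`, and the gaps of a convergent sequence tend to `0`.
-/

noncomputable def eigenDenom (c t : ℝ) : ℝ := t + c + √(t ^ 2 + 2 * c * t)

section eigenDenom

variable {c : ℝ}

lemma eigenDenom_pos (hc : 0 < c) {t : ℝ} (ht : 0 ≤ t) : 0 < eigenDenom c t := by
  unfold eigenDenom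
  positivity

lemma eigenDenom_strictMonoOn (hc : 0 ≤ c) : StrictMonoOn (eigenDenom c) (Ici 0) := by
  intro s hs t _ hst
  have hrad : s ^ 2 + 2 * c * s ≤ t ^ 2 + 2 * c * t := by
    have := mul_le_mul_of_nonneg_left hst.le hc
    nlinarith [mem_Ici.mp hs]
  unfold eigenDenom
  linarith [Real.sqrt_le_sqrt hrad]

lemma tendsto_eigenDenom_atTop : Tendsto (eigenDenom c) atTop atTop := by
  have hle (t : ℝ) : t + c ≤ eigenDenom c t := by
    unfold eigenDenom
    linarith [Real.sqrt_nonneg (t ^ 2 + 2 * c * t)]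
  exact tendsto_atTop_mono hle (tendsto_atTop_add_const_right _ c tendsto_id)

end eigenDenom

section shiftedSquare

variable {a s : ℝ}

lemma strictMono_mul_natCast_add_sq (ha : 0 < a) (hs : 0 ≤ s) :
    StrictMono fun n : ℕ => a * ((n : ℝ) + s) ^ 2 := by
  intro m n hmn
  have : (m : ℝ) < n := by exact_mod_cast hmn
  dsimp only
  gcongr

lemma tendsto_mul_natCast_add_sq_atTop (ha : 0 < a) :
    Tendsto (fun n : ℕ => a * ((n : ℝ) + s) ^ 2) atTop atTop := by
  refine Tendsto.const_mul_atTop ha (tendsto_pow_atTop two_ne_zero |>.comp ?_)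
  exact tendsto_atTop_add_const_right _ s tendsto_natCast_atTop_atTop

end shiftedSquare

lemma StrictMono.neg_const_div {D : ℕ → ℝ} {a : ℝ} (hD : StrictMono D) (hpos : ∀ n, 0 < D n)
    (ha : 0 < a) :
    StrictMono fun n => -a / D n := by
  intro m n hmn
  simp only [neg_div, neg_lt_neg_iff]
  exact div_lt_div_of_pos_left ha (hpos m) (hD hmn)

lemma tendsto_sub_succ_of_tendsto {u : ℕ → ℝ} {l : ℝ} (hu : Tendsto u atTop (nhds l)) :
    Tendsto (fun n => u (n + 1) - u n) atTop (nhds 0) := by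
  simpa using (hu.comp (tendsto_add_atTop_nat 1)).sub hu

/-- The discrete eigenvalues E_𝔫 = −k²/(ℏ²μ² + kη + √(ℏ⁴μ⁴ + 2ℏ²kημ²)),
μ = 𝔫 + (N−1)/2, are strictly increasing in 𝔫, accumulate at 0, and
consecutive gaps tend to zero. -/
theorem eigenvalues_monotone_accumulate (ℏ k η : ℝ) (N : ℕ)
    (hℏ : 0 < ℏ) (hk : 0 < k) (hη : 0 < η) (hN : 2 ≤ N) :
    let μ : ℕ → ℝ := fun n => (n : ℝ) + ((N : ℝ) - 1) / 2
    let E : ℕ → ℝ := fun n =>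
      -k ^ 2 / (ℏ ^ 2 * μ n ^ 2 + k * η +
        Real.sqrt (ℏ ^ 4 * μ n ^ 4 + 2 * ℏ ^ 2 * k * η * μ n ^ 2))
    StrictMono E ∧
    Tendsto E atTop (nhds 0) ∧
    Tendsto (fun n => E (n + 1) - E n) atTop (nhds 0) := by
  intro μ E
  set t : ℕ → ℝ := fun n => ℏ ^ 2 * μ n ^ 2
  have hE : E = fun n => -k ^ 2 / eigenDenom (k * η) (t n) := by
    funext n
    simp only [E, t, eigenDenom]
    ring_nf
  have hs : 0 ≤ ((N : ℝ) - 1) / 2 := by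
    have : (2 : ℝ) ≤ N := by exact_mod_cast hN
    linarith
  have hℏ2 : 0 < ℏ ^ 2 := by positivity
  have ht_nonneg : ∀ n, 0 ≤ t n := fun n => by positivity
  have hD_mono : StrictMono fun n => eigenDenom (k * η) (t n) := fun m n hmn =>
    eigenDenom_strictMonoOn (by positivity) (ht_nonneg m) (ht_nonneg n)
      (strictMono_mul_natCast_add_sq hℏ2 hs hmn)
  have hE_lim : Tendsto E atTop (nhds 0) := by
    rw [hE]
    exact tendsto_const_nhds.div_atTop
      (tendsto_eigenDenom_atTop.comp (tendsto_mul_natCast_add_sq_atTop hℏ2))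
  refine ⟨?_, hE_lim, tendsto_sub_succ_of_tendsto hE_lim⟩
  rw [hE]
  exact hD_mono.neg_const_div (fun n => eigenDenom_pos (by positivity) (ht_nonneg n))
    (by positivity)
end
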